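/- Let m > 0 and A ∈ C_c^∞(ℝ⁴,ℝ⁴). Let τ : ℝ⁴ → ℝ, v : ℝ⁴ × ℝ → (0,∞) and n = (n⁰, n⃗) : ℝ⁴ × ℝ → ℝ⁴ be smooth with (n_t(x)⁰)² − |n⃗_t(x)|² = 1 for all (x,t), and assume ∂τ/∂x⁰(x) = n_{τ(x)}(x)⁰ / v_{τ(x)}(x) and ∂τ/∂xᵏ(x) = −n_{τ(x)}(x)ᵏ / v_{τ(x)}(x) for k = 1,2,3 and all x ∈ ℝ⁴. Let φ : ℝ⁴ × ℝ → ℂ⁴ be smooth such that for every t the function x ↦ φ(x,t) solves the free Dirac equation i∑_μ γ^μ ∂φ/∂x^μ(x,t) = m φ(x,t), and set ψ(x) := φ(x, τ(x)). Then for every x ∈ ℝ⁴ the following are equivalent: (a) ψ satisfies the Dirac equation with potential A at x; (b) i ∂φ/∂t(x,t)|_{t=τ(x)} = v_{τ(x)}(x) · n̸_{τ(x)}(x) · A̸(x) · φ(x, τ(x)), where A̸(x) = ∑_{μ=0}^{3} γ^μ A_μ(x) and n̸ denotes the Feynman slash of the four-vector (n⁰, n⃗). -/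

import Mathlib

open Matrix MeasureTheory
open scoped BigOperators Pointwise ComplexOrder ENNReal NNReal

noncomputable section

/-- The Dirac gamma matrix `γ⁰` in the standard representation. -/
def γ0 : Matrix (Fin 4) (Fin 4) ℂ :=
  !![1, 0, 0, 0; 0, 1, 0, 0; 0, 0, -1, 0; 0, 0, 0, -1]

/-- The Dirac gamma matrix `γ¹`. -/
def γ1 : Matrix (Fin 4) (Fin 4) ℂ :=
  !![0, 0, 0, 1; 0, 0, 1, 0; 0, -1, 0, 0; -1, 0, 0, 0]

/-- The Dirac gamma matrix `γ²`. -/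
def γ2 : Matrix (Fin 4) (Fin 4) ℂ :=
  !![0, 0, 0, -Complex.I; 0, 0, Complex.I, 0; 0, Complex.I, 0, 0; -Complex.I, 0, 0, 0]

/-- The Dirac gamma matrix `γ³`. -/
def γ3 : Matrix (Fin 4) (Fin 4) ℂ :=
  !![0, 0, 1, 0; 0, 0, 0, -1; -1, 0, 0, 0; 0, 1, 0, 0]

/-- The family `μ ↦ γ^μ`. -/
def gam : Fin 4 → Matrix (Fin 4) (Fin 4) ℂ := ![γ0, γ1, γ2, γ3]

/-- Feynman slash of a four-vector (with upper indices):
`p̸ = p⁰γ⁰ - p¹γ¹ - p²γ² - p³γ³`. -/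
def slash (p : Fin 4 → ℂ) : Matrix (Fin 4) (Fin 4) ℂ :=
  p 0 • γ0 - p 1 • γ1 - p 2 • γ2 - p 3 • γ3

/-- Slash of a covector (lower indices): `A̸ = ∑ μ, A_μ γ^μ`. -/
def slashLow (a : Fin 4 → ℂ) : Matrix (Fin 4) (Fin 4) ℂ := ∑ μ, a μ • gam μ

/-- Complexification of a real four-vector. -/
def cv4 (p : Fin 4 → ℝ) : Fin 4 → ℂ := fun μ => (p μ : ℂ)

/-- The Dirac equation `i ∑ μ, γ^μ ∂_μ ψ = (m + ∑ μ, γ^μ A_μ) ψ` at a point `x`. -/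
def DiracEqAt (m : ℝ) (A : (Fin 4 → ℝ) → Fin 4 → ℝ)
    (ψ : (Fin 4 → ℝ) → Fin 4 → ℂ) (x : Fin 4 → ℝ) : Prop :=
  Complex.I • ∑ μ, gam μ *ᵥ fderiv ℝ ψ x (Pi.single μ 1) =
    (m : ℂ) • ψ x + slashLow (cv4 (A x)) *ᵥ ψ x

/-- The Dirac equation with external potential `A` (everywhere on `ℝ⁴`). -/
def DiracEq (m : ℝ) (A : (Fin 4 → ℝ) → Fin 4 → ℝ)
    (ψ : (Fin 4 → ℝ) → Fin 4 → ℂ) : Prop := ∀ x, DiracEqAt m A ψ x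

/-!
By the chain rule `∂_μ ψ = ∂_μ φ(·, τ x) + (∂_μ τ) ∂ₜφ`, and the gradient of `τ` is the covector
of `n / v`, so the Dirac operator of `ψ` is that of the slice `φ(·, τ x)` plus `v⁻¹ n̸ ∂ₜφ`.
The free equation cancels the slice against the mass term, and since `n` is a unit timelike
vector, `n̸² = 1`; multiplying what remains by `v n̸` gives the interaction-picture equation.
-/

section Calculus

variable {𝕜 E F : Type*} [NontriviallyNormedField 𝕜]
  [NormedAddCommGroup E] [NormedSpace 𝕜 E] [NormedAddCommGroup F] [NormedSpace 𝕜 F]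

theorem fderiv_comp_graph_apply {φ : E × 𝕜 → F} {τ : E → 𝕜} {x : E}
    (hφ : DifferentiableAt 𝕜 φ (x, τ x)) (hτ : DifferentiableAt 𝕜 τ x) (w : E) :
    fderiv 𝕜 (fun y => φ (y, τ y)) x w =
      fderiv 𝕜 (fun y => φ (y, τ x)) x w + fderiv 𝕜 τ x w • deriv (fun t => φ (x, t)) (τ x) := by
  set L := fderiv 𝕜 φ (x, τ x)
  have hL : HasFDerivAt φ L (x, τ x) := hφ.hasFDerivAt
  have hgraph : HasFDerivAt (fun y => φ (y, τ y)) (L.comp ((ContinuousLinearMap.id 𝕜 E).prod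
      (fderiv 𝕜 τ x))) x :=
    hL.comp x ((hasFDerivAt_id x).prodMk hτ.hasFDerivAt)
  have hslice :
      HasFDerivAt (fun y => φ (y, τ x)) (L.comp ((ContinuousLinearMap.id 𝕜 E).prod 0)) x :=
    hL.comp x ((hasFDerivAt_id x).prodMk (hasFDerivAt_const (τ x) x))
  have htime : HasDerivAt (fun t => φ (x, t)) (L (0, 1)) (τ x) :=
    hL.comp_hasDerivAt (τ x) ((hasDerivAt_const (τ x) x).prodMk (hasDerivAt_id (τ x)))
  rw [hgraph.fderiv, hslice.fderiv, htime.deriv, ← L.map_smul, L.comp_apply, L.comp_apply,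
    ← L.map_add]
  simp

end Calculus

lemma slash_mul_self (p : Fin 4 → ℂ) :
    slash p * slash p = (p 0 ^ 2 - (p 1 ^ 2 + p 2 ^ 2 + p 3 ^ 2)) • 1 := by
  ext i j
  fin_cases i <;> fin_cases j <;>
    simp [slash, γ0, γ1, γ2, γ3, Matrix.mul_apply, Fin.sum_univ_four] <;> ring_nf <;>
    simp [Complex.I_sq] <;> ring

lemma slash_mul_self_eq_one {p : Fin 4 → ℝ} (hp : p 0 ^ 2 - (p 1 ^ 2 + p 2 ^ 2 + p 3 ^ 2) = 1) :
    slash (cv4 p) * slash (cv4 p) = 1 := by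
  have hp' : cv4 p 0 ^ 2 - (cv4 p 1 ^ 2 + cv4 p 2 ^ 2 + cv4 p 3 ^ 2) = 1 := by
    simp only [cv4]
    exact_mod_cast hp
  rw [slash_mul_self, hp', one_smul]

/-- Lowering the index of `s • p` turns the covector slash into the vector slash. -/
lemma slashLow_eq_smul_slash {a p : Fin 4 → ℂ} (s : ℂ) (h0 : a 0 = s * p 0)
    (hk : ∀ k : Fin 3, a k.succ = -(s * p k.succ)) : slashLow a = s • slash p := by
  have h1 : a 1 = -(s * p 1) := hk 0
  have h2 : a 2 = -(s * p 2) := hk 1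
  have h3 : a 3 = -(s * p 3) := hk 2
  have hgam : gam = ![γ0, γ1, γ2, γ3] := rfl
  simp only [slashLow, slash, Fin.sum_univ_four, hgam, h0, h1, h2, h3, cons_val_zero,
    cons_val_one, cons_val]
  module

def diracOp (ψ : (Fin 4 → ℝ) → Fin 4 → ℂ) (x : Fin 4 → ℝ) : Fin 4 → ℂ :=
  ∑ μ, gam μ *ᵥ fderiv ℝ ψ x (Pi.single μ 1)

lemma sum_gam_mulVec_smul (c : Fin 4 → ℂ) (w : Fin 4 → ℂ) :
    ∑ μ, gam μ *ᵥ (c μ • w) = slashLow c *ᵥ w := by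
  simp [slashLow, Matrix.sum_mulVec, Matrix.mulVec_smul, Matrix.smul_mulVec]

lemma diracOp_comp_graph {φ : (Fin 4 → ℝ) × ℝ → Fin 4 → ℂ} {τ : (Fin 4 → ℝ) → ℝ}
    {x : Fin 4 → ℝ} (hφ : DifferentiableAt ℝ φ (x, τ x)) (hτ : DifferentiableAt ℝ τ x) :
    diracOp (fun y => φ (y, τ y)) x = diracOp (fun y => φ (y, τ x)) x +
      slashLow (cv4 fun μ => fderiv ℝ τ x (Pi.single μ 1)) *ᵥ deriv (fun t => φ (x, t)) (τ x) := by
  simp only [diracOp, fderiv_comp_graph_apply hφ hτ, Matrix.mulVec_add, Finset.sum_add_distrib,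
    ← Complex.coe_smul, ← sum_gam_mulVec_smul]
  rfl

lemma inv_smul_mulVec_eq_iff {n K : Type*} [Fintype n] [DecidableEq n] [Field K]
    {S : Matrix n n K} (hS : S * S = 1) {c : K} (hc : c ≠ 0) (u w : n → K) :
    (c⁻¹ • S) *ᵥ u = w ↔ u = c • (S *ᵥ w) := by
  constructor <;> rintro rfl <;>
    simp [Matrix.smul_mulVec, Matrix.mulVec_smul, Matrix.mulVec_mulVec, hS, smul_smul, hc]

theorem schroedinger_interaction_equivalence_general (m : ℝ)
    (A : (Fin 4 → ℝ) → Fin 4 → ℝ)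
    (τ : (Fin 4 → ℝ) → ℝ) (hτ : ContDiff ℝ (⊤ : ℕ∞) τ)
    (v : (Fin 4 → ℝ) → ℝ → ℝ)
    (hvpos : ∀ x t, 0 < v x t)
    (nn : (Fin 4 → ℝ) → ℝ → Fin 4 → ℝ)
    (hnorm : ∀ x t, (nn x t 0) ^ 2 - ((nn x t 1) ^ 2 + (nn x t 2) ^ 2 + (nn x t 3) ^ 2) = 1)
    (hτ0 : ∀ x, fderiv ℝ τ x (Pi.single 0 1) = nn x (τ x) 0 / v x (τ x))
    (hτk : ∀ x, ∀ k : Fin 3,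
      fderiv ℝ τ x (Pi.single k.succ 1) = -(nn x (τ x) k.succ) / v x (τ x))
    (φ : (Fin 4 → ℝ) × ℝ → Fin 4 → ℂ) (hφ : ContDiff ℝ (⊤ : ℕ∞) φ)
    (hfree : ∀ t x, Complex.I • ∑ μ, gam μ *ᵥ fderiv ℝ (fun y => φ (y, t)) x (Pi.single μ 1)
      = (m : ℂ) • φ (x, t))
    (x : Fin 4 → ℝ) :
    DiracEqAt m A (fun y => φ (y, τ y)) x ↔
      Complex.I • deriv (fun t => φ (x, t)) (τ x) =
        v x (τ x) •
          ((slash (cv4 (nn x (τ x))) * slashLow (cv4 (A x))) *ᵥ φ (x, τ x)) := by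
  have hv : (v x (τ x) : ℂ) ≠ 0 := Complex.ofReal_ne_zero.mpr (hvpos x (τ x)).ne'
  have hgrad : slashLow (cv4 fun μ => fderiv ℝ τ x (Pi.single μ 1)) =
      (v x (τ x) : ℂ)⁻¹ • slash (cv4 (nn x (τ x))) :=
    slashLow_eq_smul_slash _ (by simp [cv4, hτ0, div_eq_inv_mul])
      (fun k => by simp [cv4, hτk, div_eq_inv_mul])
  have hgraph := diracOp_comp_graph (hφ.differentiable (by simp) (x, τ x))
    (hτ.differentiable (by simp) x)
  have hslice : Complex.I • diracOp (fun y => φ (y, τ x)) x = (m : ℂ) • φ (x, τ x) :=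
    hfree (τ x) x
  show Complex.I • diracOp (fun y => φ (y, τ y)) x = _ ↔ _
  rw [hgraph, hgrad, smul_add, hslice, add_right_inj, ← Matrix.mulVec_smul,
    inv_smul_mulVec_eq_iff (slash_mul_self_eq_one (hnorm x (τ x))) hv, Matrix.mulVec_mulVec,
    Complex.coe_smul]

/-- Equivalence of the Schrödinger picture and the interaction picture on a foliation
of space-time by Cauchy surfaces: `ψ(x) = φ(x, τ(x))` satisfies the Dirac equation
with potential `A` at `x` if and only if `i ∂ₜφ(x,t)|_{t=τ(x)} = v n̸ A̸ φ(x,τ(x))`. -/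
theorem schroedinger_interaction_equivalence (m : ℝ) (hm : 0 < m)
    (A : (Fin 4 → ℝ) → Fin 4 → ℝ)
    (hA : ContDiff ℝ (⊤ : ℕ∞) A) (hAc : HasCompactSupport A)
    (τ : (Fin 4 → ℝ) → ℝ) (hτ : ContDiff ℝ (⊤ : ℕ∞) τ)
    (v : (Fin 4 → ℝ) → ℝ → ℝ)
    (hv : ContDiff ℝ (⊤ : ℕ∞) (fun q : (Fin 4 → ℝ) × ℝ => v q.1 q.2))
    (hvpos : ∀ x t, 0 < v x t)
    (nn : (Fin 4 → ℝ) → ℝ → Fin 4 → ℝ)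
    (hnn : ContDiff ℝ (⊤ : ℕ∞) (fun q : (Fin 4 → ℝ) × ℝ => nn q.1 q.2))
    (hnorm : ∀ x t, (nn x t 0) ^ 2 - ((nn x t 1) ^ 2 + (nn x t 2) ^ 2 + (nn x t 3) ^ 2) = 1)
    (hτ0 : ∀ x, fderiv ℝ τ x (Pi.single 0 1) = nn x (τ x) 0 / v x (τ x))
    (hτk : ∀ x, ∀ k : Fin 3,
      fderiv ℝ τ x (Pi.single k.succ 1) = -(nn x (τ x) k.succ) / v x (τ x))
    (φ : (Fin 4 → ℝ) × ℝ → Fin 4 → ℂ) (hφ : ContDiff ℝ (⊤ : ℕ∞) φ)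
    (hfree : ∀ t x, Complex.I • ∑ μ, gam μ *ᵥ fderiv ℝ (fun y => φ (y, t)) x (Pi.single μ 1)
      = (m : ℂ) • φ (x, t))
    (x : Fin 4 → ℝ) :
    DiracEqAt m A (fun y => φ (y, τ y)) x ↔
      Complex.I • deriv (fun t => φ (x, t)) (τ x) =
        v x (τ x) •
          ((slash (cv4 (nn x (τ x))) * slashLow (cv4 (A x))) *ᵥ φ (x, τ x)) :=
  schroedinger_interaction_equivalence_general m A τ hτ v hvpos nn hnorm hτ0 hτk φ hφ hfree x
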